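/- arXiv:2412.00919 — 4 statements merged into one kernel-verified Lean document; each statement's English description precedes it below -/
import Mathlib

section
/- Let P be an orthogonal projection and U a unitary operator on a Hilbert space H such that the commutator [P,U] is compact. Then PUP and PU*P, viewed as operators on the range of P, are Fredholm operators with Index(PUP) = −Index(PU*P). -/
noncomputable section

open ContinuousLinearMap Metric Filter Topology

section AtkinsonAux

variable {E : Type*} [NormedAddCommGroup E] [InnerProductSpace ℂ E] [CompleteSpace E]

omit [CompleteSpace E] in
theorem ker_fd_aux (A S : E →L[ℂ] E) (h : IsCompactOperator ⇑(S ∘L A - 1)) :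
    FiniteDimensional ℂ (LinearMap.ker (A : E →ₗ[ℂ] E)) := by
  set K : E →L[ℂ] E := S ∘L A - 1 with hK
  have hKneg : IsCompactOperator ⇑(-K) := by
    have := h.neg
    simpa using this
  have hC : IsCompact (closure (⇑(-K) '' closedBall (0 : E) 1)) :=
    hKneg.isCompact_closure_image_closedBall 1
  set S1 : Set E := (LinearMap.ker (A : E →ₗ[ℂ] E) : Set E) ∩ closedBall (0 : E) 1 with hS1
  have hfix : ∀ x ∈ (LinearMap.ker (A : E →ₗ[ℂ] E) : Set E), (-K) x = x := by
    intro x hx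
    have hx' : A x = 0 := hx
    simp [hK, hx']
  have hsub : S1 ⊆ closure (⇑(-K) '' closedBall (0 : E) 1) := by
    rintro x ⟨hx1, hx2⟩
    exact subset_closure ⟨x, hx2, hfix x hx1⟩
  have hS1closed : IsClosed S1 :=
    (ContinuousLinearMap.isClosed_ker A).inter Metric.isClosed_closedBall
  have hS1compact : IsCompact S1 := hC.of_isClosed_subset hS1closed hsub
  have hball : closedBall (0 : LinearMap.ker (A : E →ₗ[ℂ] E)) 1 = Subtype.val ⁻¹' S1 := by
    ext x
    simp only [mem_closedBall, Set.mem_preimage, hS1, Set.mem_inter_iff, SetLike.mem_coe]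
    constructor
    · intro hx
      refine ⟨x.2, ?_⟩
      simpa [dist_eq_norm] using hx
    · intro hx
      simpa [dist_eq_norm, Subtype.dist_eq] using hx.2
  have hcb : IsCompact (closedBall (0 : LinearMap.ker (A : E →ₗ[ℂ] E)) 1) := by
    rw [hball]
    exact (ContinuousLinearMap.isClosed_ker A).isClosedEmbedding_subtypeVal.isCompact_preimage
      hS1compact
  exact FiniteDimensional.of_isCompact_closedBall₀ ℂ one_pos hcb

theorem range_closed_aux (A S : E →L[ℂ] E) (h : IsCompactOperator ⇑(S ∘L A - 1)) :
    IsClosed ((LinearMap.range (A : E →ₗ[ℂ] E) : Submodule ℂ E) : Set E) := by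
  classical
  set N : Submodule ℂ E := (LinearMap.ker (A : E →ₗ[ℂ] E))ᗮ with hN
  have hNclosed : IsClosed (N : Set E) := Submodule.isClosed_orthogonal _
  haveI : CompleteSpace N := hNclosed.completeSpace_coe
  haveI : CompleteSpace (LinearMap.ker (A : E →ₗ[ℂ] E)) :=
    (ContinuousLinearMap.isClosed_ker A).completeSpace_coe
  set K : E →L[ℂ] E := S ∘L A - 1 with hK
  have key : ∃ c : ℝ, 0 < c ∧ ∀ x ∈ N, ‖x‖ ≤ c * ‖A x‖ := by
    by_contra hc
    push_neg at hc
    have hex : ∀ n : ℕ, ∃ x, x ∈ N ∧ ((n : ℝ) + 1) * ‖A x‖ < ‖x‖ := by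
      intro n
      obtain ⟨x, hxN, hx⟩ := hc ((n : ℝ) + 1) (by positivity)
      exact ⟨x, hxN, hx⟩
    choose x hxN hxlt using hex
    have hxne : ∀ n, x n ≠ 0 := by
      intro n hn
      have := hxlt n
      rw [hn] at this
      simp at this
    set y : ℕ → E := fun n => ‖x n‖⁻¹ • x n with hy
    have hynorm : ∀ n, ‖y n‖ = 1 := by
      intro n
      have : ‖x n‖ ≠ 0 := norm_ne_zero_iff.2 (hxne n)
      simp [hy, norm_smul, inv_mul_cancel₀ this]
    have hyN : ∀ n, y n ∈ N := fun n => N.smul_mem _ (hxN n)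
    have hAy : Tendsto (fun n => A (y n)) atTop (𝓝 0) := by
      rw [tendsto_zero_iff_norm_tendsto_zero]
      have hbound : ∀ n : ℕ, ‖A (y n)‖ ≤ 1 / ((n : ℝ) + 1) := by
        intro n
        have hxpos : (0 : ℝ) < ‖x n‖ := norm_pos_iff.2 (hxne n)
        have h1 : ‖A (y n)‖ = ‖x n‖⁻¹ * ‖A (x n)‖ := by
          simp [hy, norm_smul]
        have h2 := hxlt n
        have h3 : ‖x n‖⁻¹ * ‖x n‖ = 1 := inv_mul_cancel₀ hxpos.ne'
        have h4 : (0:ℝ) < (n:ℝ)+1 := by positivity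
        rw [h1, le_div_iff₀ h4]
        nlinarith [h2, h3, inv_pos.2 hxpos, norm_nonneg (A (x n))]
      exact squeeze_zero (fun n => norm_nonneg _) hbound
        (tendsto_one_div_add_atTop_nhds_zero_nat)
    have hC : IsCompact (closure (⇑K '' closedBall (0 : E) 1)) :=
      h.isCompact_closure_image_closedBall 1
    have hmem : ∀ n, K (y n) ∈ closure (⇑K '' closedBall (0 : E) 1) := by
      intro n
      exact subset_closure ⟨y n, by simp [hynorm n], rfl⟩
    obtain ⟨z, _, φ, hφ, hKz⟩ := hC.tendsto_subseq hmem
    have hylim : Tendsto (fun n => y (φ n)) atTop (𝓝 (-z)) := by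
      have hrepr : ∀ n, y (φ n) = S (A (y (φ n))) - K (y (φ n)) := by
        intro n
        simp [hK, sub_apply, comp_apply]
      rw [show (fun n => y (φ n)) = fun n => S (A (y (φ n))) - K (y (φ n)) from
        funext hrepr]
      have h1 : Tendsto (fun n => S (A (y (φ n)))) atTop (𝓝 0) := by
        have : Tendsto (fun n => A (y (φ n))) atTop (𝓝 0) :=
          hAy.comp hφ.tendsto_atTop
        have := (S.continuous.tendsto 0).comp this
        simpa [Function.comp_def] using this
      simpa using h1.sub hKz
    have hwnorm : ‖(-z : E)‖ = 1 := by
      have h1 : Tendsto (fun n => ‖y (φ n)‖) atTop (𝓝 ‖(-z : E)‖) :=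
        (continuous_norm.tendsto _).comp hylim
      have h2 : (fun n => ‖y (φ n)‖) = fun _ => (1:ℝ) := funext fun n => hynorm (φ n)
      rw [h2] at h1
      exact tendsto_nhds_unique h1 tendsto_const_nhds
    have hwN : (-z : E) ∈ N :=
      hNclosed.mem_of_tendsto hylim (Eventually.of_forall fun n => hyN (φ n))
    have hwker : A (-z) = 0 :=
      tendsto_nhds_unique ((A.continuous.tendsto _).comp hylim)
        (hAy.comp hφ.tendsto_atTop)
    have : (-z : E) = 0 := by
      have := (Submodule.mem_orthogonal _ (-z)).1 hwN (-z) hwker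
      exact inner_self_eq_zero.1 this
    rw [this] at hwnorm
    simp at hwnorm
  obtain ⟨c, hcpos, hc⟩ := key
  set A' : N →L[ℂ] E := A ∘L N.subtypeL with hA'
  have hanti : AntilipschitzWith c.toNNReal ⇑A' := by
    apply A'.antilipschitz_of_bound
    intro x
    have := hc (x : E) x.2
    simpa [hA', Real.coe_toNNReal c hcpos.le] using this
  have hclosed : IsClosed (Set.range ⇑A') :=
    hanti.isClosed_range A'.uniformContinuous
  have hrangeeq : ((LinearMap.range (A : E →ₗ[ℂ] E) : Submodule ℂ E) : Set E) = Set.range ⇑A' := by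
    ext w
    constructor
    · rintro ⟨v, rfl⟩
      obtain ⟨k, hk, n, hn, rfl⟩ := (LinearMap.ker (A : E →ₗ[ℂ] E)).exists_add_mem_mem_orthogonal v
      refine ⟨⟨n, hn⟩, ?_⟩
      simp [hA', map_add, hk, LinearMap.mem_ker.1 hk]
    · rintro ⟨v, rfl⟩
      exact ⟨(v : E), rfl⟩
  rw [hrangeeq]
  exact hclosed

theorem coker_equiv_aux (A B : E →L[ℂ] E) (hadj : ContinuousLinearMap.adjoint A = B)
    (hcl : IsClosed ((LinearMap.range (A : E →ₗ[ℂ] E) : Submodule ℂ E) : Set E)) :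
    Nonempty ((E ⧸ LinearMap.range (A : E →ₗ[ℂ] E)) ≃ₗ[ℂ] LinearMap.ker (B : E →ₗ[ℂ] E)) := by
  haveI : CompleteSpace (LinearMap.range (A : E →ₗ[ℂ] E)) := hcl.completeSpace_coe
  have hcompl : IsCompl (LinearMap.range (A : E →ₗ[ℂ] E)) (LinearMap.range (A : E →ₗ[ℂ] E))ᗮ :=
    Submodule.isCompl_orthogonal_of_hasOrthogonalProjection
  have horth : (LinearMap.range (A : E →ₗ[ℂ] E))ᗮ = LinearMap.ker (B : E →ₗ[ℂ] E) := by
    ext x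
    rw [Submodule.mem_orthogonal, LinearMap.mem_ker]
    constructor
    · intro hx
      have h1 : ∀ y : E, inner (𝕜 := ℂ) y (B x) = 0 := by
        intro y
        have h2 : inner (𝕜 := ℂ) y ((ContinuousLinearMap.adjoint A) x) = inner ℂ (A y) x :=
          ContinuousLinearMap.adjoint_inner_right A y x
        rw [hadj] at h2
        rw [h2]
        exact hx (A y) (LinearMap.mem_range_self _ y)
      have := h1 (B x)
      exact inner_self_eq_zero.1 this
    · rintro hBx u ⟨y, rfl⟩
      have h2 : inner (𝕜 := ℂ) y ((ContinuousLinearMap.adjoint A) x) = inner ℂ (A y) x :=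
        ContinuousLinearMap.adjoint_inner_right A y x
      rw [hadj, show B x = 0 from hBx, inner_zero_right] at h2
      exact h2.symm
  exact ⟨(Submodule.quotientEquivOfIsCompl _ _ hcompl).trans (LinearEquiv.ofEq _ _ horth)⟩

end AtkinsonAux

variable {H : Type*} [NormedAddCommGroup H] [InnerProductSpace ℂ H] [CompleteSpace H]

/-- Index of a linear map between (possibly infinite-dimensional) spaces, as
dim ker − dim coker. -/
noncomputable def lmIndex {M : Type*} [AddCommGroup M] [Module ℂ M] (A : M →ₗ[ℂ] M) : ℤ :=
  (Module.finrank ℂ (LinearMap.ker A) : ℤ) - (Module.finrank ℂ (M ⧸ LinearMap.range A) : ℤ)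

/-- if `P` is an orthogonal projection, `U` unitary and `[P,U]` compact, then
`PUP` and `PU*P`, viewed as operators on `Ran P`, are Fredholm with opposite indices. -/
theorem fredholm_PUP (P U : H →L[ℂ] H)
    (hPsa : ContinuousLinearMap.adjoint P = P) (hPproj : P ∘L P = P)
    (hU₁ : ContinuousLinearMap.adjoint U ∘L U = 1)
    (hU₂ : U ∘L ContinuousLinearMap.adjoint U = 1)
    (hcomm : IsCompactOperator (⇑(P ∘L U - U ∘L P))) :
    ∀ A B : ↥(LinearMap.range (P : H →ₗ[ℂ] H)) →ₗ[ℂ] ↥(LinearMap.range (P : H →ₗ[ℂ] H)),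
      (∀ x : ↥(LinearMap.range (P : H →ₗ[ℂ] H)), (A x : H) = P (U (P (x : H)))) →
      (∀ x : ↥(LinearMap.range (P : H →ₗ[ℂ] H)), (B x : H) = P (ContinuousLinearMap.adjoint U (P (x : H)))) →
      (FiniteDimensional ℂ (LinearMap.ker A) ∧
        FiniteDimensional ℂ (↥(LinearMap.range (P : H →ₗ[ℂ] H)) ⧸ LinearMap.range A)) ∧
      (FiniteDimensional ℂ (LinearMap.ker B) ∧
        FiniteDimensional ℂ (↥(LinearMap.range (P : H →ₗ[ℂ] H)) ⧸ LinearMap.range B)) ∧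
      lmIndex A = - lmIndex B := by
  intro A B hA hB
  set Ud : H →L[ℂ] H := ContinuousLinearMap.adjoint U with hUd
  have happ : ∀ x : H, P (P x) = P x := fun x => by
    have := ContinuousLinearMap.ext_iff.1 hPproj x
    simpa using this
  have hPfix : ∀ x : H, x ∈ LinearMap.range (P : H →ₗ[ℂ] H) → P x = x := by
    rintro _ ⟨y, rfl⟩
    exact happ y
  have hUdU : ∀ x : H, Ud (U x) = x := fun x => by
    have := ContinuousLinearMap.ext_iff.1 hU₁ x
    simpa using this
  have hUUd : ∀ x : H, U (Ud x) = x := fun x => by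
    have := ContinuousLinearMap.ext_iff.1 hU₂ x
    simpa using this
  have hclosed : IsClosed ((LinearMap.range (P : H →ₗ[ℂ] H) : Submodule ℂ H) : Set H) := by
    have hset : ((LinearMap.range (P : H →ₗ[ℂ] H) : Submodule ℂ H) : Set H) = {x : H | P x = x} := by
      ext x
      constructor
      · intro hx
        exact hPfix x hx
      · intro hx
        exact ⟨x, hx⟩
    rw [hset]
    exact isClosed_eq P.continuous continuous_id
  haveI : CompleteSpace (LinearMap.range (P : H →ₗ[ℂ] H)) := hclosed.completeSpace_coe
  -- the continuous versions of A and B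
  set A₀ : ↥(LinearMap.range (P : H →ₗ[ℂ] H)) →L[ℂ] ↥(LinearMap.range (P : H →ₗ[ℂ] H)) :=
    ((P ∘L U) ∘L (LinearMap.range (P : H →ₗ[ℂ] H)).subtypeL).codRestrict (LinearMap.range (P : H →ₗ[ℂ] H))
      (fun x => ⟨_, rfl⟩) with hA₀
  set B₀ : ↥(LinearMap.range (P : H →ₗ[ℂ] H)) →L[ℂ] ↥(LinearMap.range (P : H →ₗ[ℂ] H)) :=
    ((P ∘L Ud) ∘L (LinearMap.range (P : H →ₗ[ℂ] H)).subtypeL).codRestrict (LinearMap.range (P : H →ₗ[ℂ] H))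
      (fun x => ⟨_, rfl⟩) with hB₀
  have hA₀coe : ∀ x : ↥(LinearMap.range (P : H →ₗ[ℂ] H)), ((A₀ x : ↥(LinearMap.range (P : H →ₗ[ℂ] H))) : H) = P (U (x : H)) :=
    fun x => rfl
  have hB₀coe : ∀ x : ↥(LinearMap.range (P : H →ₗ[ℂ] H)), ((B₀ x : ↥(LinearMap.range (P : H →ₗ[ℂ] H))) : H) = P (Ud (x : H)) :=
    fun x => rfl
  have hAeq : A = (A₀ : ↥(LinearMap.range (P : H →ₗ[ℂ] H)) →ₗ[ℂ] ↥(LinearMap.range (P : H →ₗ[ℂ] H))) := by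
    ext x
    rw [hA x, hPfix (x : H) x.2]
    exact (hA₀coe x).symm
  have hBeq : B = (B₀ : ↥(LinearMap.range (P : H →ₗ[ℂ] H)) →ₗ[ℂ] ↥(LinearMap.range (P : H →ₗ[ℂ] H))) := by
    ext x
    rw [hB x, hPfix (x : H) x.2]
    exact (hB₀coe x).symm
  subst hAeq
  subst hBeq
  -- compactness of B₀A₀ - 1 and A₀B₀ - 1
  set D : H →L[ℂ] H := P ∘L U - U ∘L P with hD
  have h1 : IsCompactOperator ⇑(B₀ ∘L A₀ - 1) := by
    set C₁ : H →L[ℂ] H := P ∘L (Ud ∘L D) with hC₁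
    have hC₁cpt : IsCompactOperator ⇑C₁ := by
      have h' : IsCompactOperator (⇑(P ∘L Ud) ∘ ⇑D) :=
        hcomm.continuous_comp (P ∘L Ud).continuous
      exact h'
    have mem₁ : ∀ x : ↥(LinearMap.range (P : H →ₗ[ℂ] H)),
        (⇑C₁ ∘ ⇑(LinearMap.range (P : H →ₗ[ℂ] H)).subtypeL) x ∈ LinearMap.range (P : H →ₗ[ℂ] H) := fun x => ⟨_, rfl⟩
    have hK₁ : IsCompactOperator
        (Set.codRestrict (⇑C₁ ∘ ⇑(LinearMap.range (P : H →ₗ[ℂ] H)).subtypeL) (LinearMap.range (P : H →ₗ[ℂ] H)) mem₁) :=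
      (hC₁cpt.comp_clm (LinearMap.range (P : H →ₗ[ℂ] H)).subtypeL).codRestrict mem₁ hclosed
    have heq : ⇑(B₀ ∘L A₀ - 1) =
        Set.codRestrict (⇑C₁ ∘ ⇑(LinearMap.range (P : H →ₗ[ℂ] H)).subtypeL) (LinearMap.range (P : H →ₗ[ℂ] H)) mem₁ := by
      funext x
      apply Subtype.ext
      show P (Ud (P (U (x : H)))) - (x : H) = C₁ (x : H)
      have : C₁ (x : H) = P (Ud (P (U (x : H)) - U (P (x : H)))) := rfl
      rw [this, hPfix (x : H) x.2]
      simp [map_sub, hUdU, hPfix (x : H) x.2]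
    rw [heq]
    exact hK₁
  have h2 : IsCompactOperator ⇑(A₀ ∘L B₀ - 1) := by
    set C₂ : H →L[ℂ] H := -(P ∘L (D ∘L Ud)) with hC₂
    have hC₂cpt : IsCompactOperator ⇑C₂ := by
      have h' : IsCompactOperator (⇑(P ∘L D) ∘ ⇑Ud) := by
        have hPD : IsCompactOperator ⇑(P ∘L D) := by
          have := hcomm.continuous_comp P.continuous
          exact this
        exact hPD.comp_clm Ud
      have h'' : IsCompactOperator (-(⇑(P ∘L D) ∘ ⇑Ud)) := h'.neg
      have : ⇑C₂ = -(⇑(P ∘L D) ∘ ⇑Ud) := by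
        funext x
        simp [hC₂]
      rw [this]
      exact h''
    have mem₂ : ∀ x : ↥(LinearMap.range (P : H →ₗ[ℂ] H)),
        (⇑C₂ ∘ ⇑(LinearMap.range (P : H →ₗ[ℂ] H)).subtypeL) x ∈ LinearMap.range (P : H →ₗ[ℂ] H) := by
      intro x
      have : (⇑C₂ ∘ ⇑(LinearMap.range (P : H →ₗ[ℂ] H)).subtypeL) x = -(P ((D ∘L Ud) (x : H))) := rfl
      rw [this]
      exact (LinearMap.range (P : H →ₗ[ℂ] H)).neg_mem ⟨_, rfl⟩
    have hK₂ : IsCompactOperator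
        (Set.codRestrict (⇑C₂ ∘ ⇑(LinearMap.range (P : H →ₗ[ℂ] H)).subtypeL) (LinearMap.range (P : H →ₗ[ℂ] H)) mem₂) :=
      (hC₂cpt.comp_clm (LinearMap.range (P : H →ₗ[ℂ] H)).subtypeL).codRestrict mem₂ hclosed
    have heq : ⇑(A₀ ∘L B₀ - 1) =
        Set.codRestrict (⇑C₂ ∘ ⇑(LinearMap.range (P : H →ₗ[ℂ] H)).subtypeL) (LinearMap.range (P : H →ₗ[ℂ] H)) mem₂ := by
      funext x
      apply Subtype.ext
      show P (U (P (Ud (x : H)))) - (x : H) = C₂ (x : H)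
      have : C₂ (x : H) = -(P (P (U (Ud (x : H))) - U (P (Ud (x : H))))) := rfl
      rw [this]
      simp [map_sub, hUUd, happ, hPfix (x : H) x.2, neg_sub]
    rw [heq]
    exact hK₂
  -- adjoint relation
  have hPinner : ∀ a b : H, inner (𝕜 := ℂ) (P a) b = inner ℂ a (P b) := fun a b => by
    conv_lhs => rw [← hPsa]
    exact ContinuousLinearMap.adjoint_inner_left P b a
  have hUinner : ∀ a b : H, inner (𝕜 := ℂ) (Ud a) b = inner ℂ a (U b) := fun a b =>
    ContinuousLinearMap.adjoint_inner_left U b a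
  have hadjA : ContinuousLinearMap.adjoint A₀ = B₀ := by
    refine ((ContinuousLinearMap.eq_adjoint_iff B₀ A₀).2 ?_).symm
    intro x y
    rw [Submodule.coe_inner, Submodule.coe_inner, hB₀coe x, hA₀coe y]
    calc inner (𝕜 := ℂ) (P (Ud (x : H))) (y : H)
        = inner (𝕜 := ℂ) (Ud (x : H)) (P (y : H)) := hPinner _ _
      _ = inner (𝕜 := ℂ) (Ud (x : H)) (y : H) := by rw [hPfix (y : H) y.2]
      _ = inner (𝕜 := ℂ) (x : H) (U (y : H)) := hUinner _ _
      _ = inner (𝕜 := ℂ) (P (x : H)) (U (y : H)) := by rw [hPfix (x : H) x.2]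
      _ = inner (𝕜 := ℂ) (x : H) (P (U (y : H))) := hPinner _ _
  have hadjB : ContinuousLinearMap.adjoint B₀ = A₀ := by
    rw [← hadjA, ContinuousLinearMap.adjoint_adjoint]
  -- apply the abstract lemmas
  have hkerA : FiniteDimensional ℂ (LinearMap.ker (A₀ : ↥(LinearMap.range (P : H →ₗ[ℂ] H)) →ₗ[ℂ] ↥(LinearMap.range (P : H →ₗ[ℂ] H)))) := ker_fd_aux A₀ B₀ h1
  have hkerB : FiniteDimensional ℂ (LinearMap.ker (B₀ : ↥(LinearMap.range (P : H →ₗ[ℂ] H)) →ₗ[ℂ] ↥(LinearMap.range (P : H →ₗ[ℂ] H)))) := ker_fd_aux B₀ A₀ h2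
  have hclA := range_closed_aux A₀ B₀ h1
  have hclB := range_closed_aux B₀ A₀ h2
  obtain ⟨eA⟩ := coker_equiv_aux A₀ B₀ hadjA hclA
  obtain ⟨eB⟩ := coker_equiv_aux B₀ A₀ hadjB hclB
  haveI hcokA : FiniteDimensional ℂ
      (↥(LinearMap.range (P : H →ₗ[ℂ] H)) ⧸ LinearMap.range (A₀ : ↥(LinearMap.range (P : H →ₗ[ℂ] H)) →ₗ[ℂ] ↥(LinearMap.range (P : H →ₗ[ℂ] H)))) := by
    exact Module.Finite.equiv eA.symm
  haveI hcokB : FiniteDimensional ℂ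
      (↥(LinearMap.range (P : H →ₗ[ℂ] H)) ⧸ LinearMap.range (B₀ : ↥(LinearMap.range (P : H →ₗ[ℂ] H)) →ₗ[ℂ] ↥(LinearMap.range (P : H →ₗ[ℂ] H)))) := by
    exact Module.Finite.equiv eB.symm
  refine ⟨⟨hkerA, hcokA⟩, ⟨hkerB, hcokB⟩, ?_⟩
  have r1 : (Module.finrank ℂ
      (↥(LinearMap.range (P : H →ₗ[ℂ] H)) ⧸ LinearMap.range
        (A₀ : ↥(LinearMap.range (P : H →ₗ[ℂ] H)) →ₗ[ℂ] ↥(LinearMap.range (P : H →ₗ[ℂ] H)))) : ℤ) =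
      (Module.finrank ℂ (LinearMap.ker
        (B₀ : ↥(LinearMap.range (P : H →ₗ[ℂ] H)) →ₗ[ℂ] ↥(LinearMap.range (P : H →ₗ[ℂ] H)))) : ℤ) := by
    exact congrArg (fun n : ℕ => (n : ℤ)) eA.finrank_eq
  have r2 : (Module.finrank ℂ
      (↥(LinearMap.range (P : H →ₗ[ℂ] H)) ⧸ LinearMap.range
        (B₀ : ↥(LinearMap.range (P : H →ₗ[ℂ] H)) →ₗ[ℂ] ↥(LinearMap.range (P : H →ₗ[ℂ] H)))) : ℤ) =
      (Module.finrank ℂ (LinearMap.ker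
        (A₀ : ↥(LinearMap.range (P : H →ₗ[ℂ] H)) →ₗ[ℂ] ↥(LinearMap.range (P : H →ₗ[ℂ] H)))) : ℤ) := by
    exact congrArg (fun n : ℕ => (n : ℤ)) eB.finrank_eq
  unfold lmIndex
  rw [r1, r2]
  ring
end
end

section
/- Let P and Q be orthogonal projections on a Hilbert space. Then every eigenvalue λ of P − Q with λ ∉ {−1, 0, 1} satisfies that −λ is also an eigenvalue of P − Q with the same multiplicity. -/
noncomputable section

variable {H : Type*} [NormedAddCommGroup H] [InnerProductSpace ℂ H] [CompleteSpace H]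

/-- for orthogonal projections `P, Q`, every eigenvalue `λ ∉ {−1,0,1}` of
`P − Q` is matched by the eigenvalue `−λ` with the same multiplicity. -/
theorem eigenvalue_symmetry_of_difference_of_projections (P Q : H →L[ℂ] H)
    (hPsa : ContinuousLinearMap.adjoint P = P) (hPproj : P ∘L P = P)
    (hQsa : ContinuousLinearMap.adjoint Q = Q) (hQproj : Q ∘L Q = Q) :
    ∀ μ : ℂ, μ ≠ -1 → μ ≠ 0 → μ ≠ 1 →
      LinearMap.ker (((P - Q) - μ • (1 : H →L[ℂ] H) : H →L[ℂ] H) : H →ₗ[ℂ] H) ≠ ⊥ →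
      (LinearMap.ker (((P - Q) - (-μ) • (1 : H →L[ℂ] H) : H →L[ℂ] H) : H →ₗ[ℂ] H) ≠ ⊥ ∧
        Module.rank ℂ (LinearMap.ker (((P - Q) - μ • (1 : H →L[ℂ] H) : H →L[ℂ] H) : H →ₗ[ℂ] H)) =
          Module.rank ℂ (LinearMap.ker (((P - Q) - (-μ) • (1 : H →L[ℂ] H) : H →L[ℂ] H) : H →ₗ[ℂ] H))) := by
  intro μ hm1 h0 h1 hne
  set A : H →L[ℂ] H := P - Q with hA
  set B : H →L[ℂ] H := 1 - P - Q with hB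
  have hPP : P * P = P := hPproj
  have hQQ : Q * Q = Q := hQproj
  have hAB : A * B = -(B * A) := by
    simp only [hA, hB, mul_sub, sub_mul, one_mul, mul_one, hPP, hQQ]
    abel
  have hBB : B * B = 1 - A * A := by
    simp only [hA, hB, mul_sub, sub_mul, one_mul, mul_one, hPP, hQQ]
    abel
  have happly : ∀ (ν : ℂ) (x : H),
      x ∈ LinearMap.ker ((A - ν • (1 : H →L[ℂ] H) : H →L[ℂ] H) : H →ₗ[ℂ] H) ↔ A x = ν • x := by
    intro ν x
    simp [LinearMap.mem_ker, sub_eq_zero]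
  have hmap : ∀ (ν : ℂ) (x : H), A x = ν • x → A (B x) = (-ν) • (B x) := by
    intro ν x hx
    have := congrArg (fun T : H →L[ℂ] H => T x) hAB
    simp only [ContinuousLinearMap.mul_apply, ContinuousLinearMap.neg_apply] at this
    rw [this, hx, map_smul, neg_smul]
  have hsq : ∀ (ν : ℂ) (x : H), A x = ν • x → B (B x) = (1 - ν ^ 2) • x := by
    intro ν x hx
    have := congrArg (fun T : H →L[ℂ] H => T x) hBB
    simp only [ContinuousLinearMap.mul_apply, ContinuousLinearMap.sub_apply,
      ContinuousLinearMap.one_apply] at this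
    rw [this, hx, map_smul, hx, smul_smul, sub_smul, one_smul]
    ring_nf
  have hc : (1 - μ ^ 2) ≠ 0 := by
    intro h
    have : (1 - μ) * (1 + μ) = 0 := by ring_nf; linear_combination h
    rcases mul_eq_zero.mp this with h' | h'
    · exact h1 (by linear_combination -h')
    · exact hm1 (by linear_combination h')
  have hmapμ : ∀ x ∈ LinearMap.ker ((A - μ • (1 : H →L[ℂ] H) : H →L[ℂ] H) : H →ₗ[ℂ] H),
      B x ∈ LinearMap.ker ((A - (-μ) • (1 : H →L[ℂ] H) : H →L[ℂ] H) : H →ₗ[ℂ] H) := by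
    intro x hx
    exact (happly _ _).mpr (hmap μ x ((happly _ _).mp hx))
  have hmapν : ∀ x ∈ LinearMap.ker ((A - (-μ) • (1 : H →L[ℂ] H) : H →L[ℂ] H) : H →ₗ[ℂ] H),
      B x ∈ LinearMap.ker ((A - μ • (1 : H →L[ℂ] H) : H →L[ℂ] H) : H →ₗ[ℂ] H) := by
    intro x hx
    have := hmap (-μ) x ((happly _ _).mp hx)
    rw [neg_neg] at this
    exact (happly _ _).mpr this
  set f : LinearMap.ker ((A - μ • (1 : H →L[ℂ] H) : H →L[ℂ] H) : H →ₗ[ℂ] H) →ₗ[ℂ]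
      LinearMap.ker ((A - (-μ) • (1 : H →L[ℂ] H) : H →L[ℂ] H) : H →ₗ[ℂ] H) :=
    (B : H →ₗ[ℂ] H).restrict hmapμ with hf
  set g : LinearMap.ker ((A - (-μ) • (1 : H →L[ℂ] H) : H →L[ℂ] H) : H →ₗ[ℂ] H) →ₗ[ℂ]
      LinearMap.ker ((A - μ • (1 : H →L[ℂ] H) : H →L[ℂ] H) : H →ₗ[ℂ] H) :=
    (B : H →ₗ[ℂ] H).restrict hmapν with hg
  have hgf : ∀ x, g (f x) = (1 - μ ^ 2) • x := by
    intro x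
    apply Subtype.ext
    simp only [hf, hg, LinearMap.restrict_coe_apply, ContinuousLinearMap.coe_coe,
      SetLike.val_smul]
    exact hsq μ x ((happly _ _).mp x.2)
  have hfg : ∀ y, f (g y) = (1 - μ ^ 2) • y := by
    intro y
    apply Subtype.ext
    simp only [hf, hg, LinearMap.restrict_coe_apply, ContinuousLinearMap.coe_coe,
      SetLike.val_smul]
    have := hsq (-μ) y ((happly _ _).mp y.2)
    rw [this]; ring_nf
  have hinj : Function.Injective f := by
    intro x y hxy
    have : (1 - μ ^ 2) • x = (1 - μ ^ 2) • y := by rw [← hgf, ← hgf, hxy]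
    exact smul_right_injective _ hc this
  have hsurj : Function.Surjective f := by
    intro y
    refine ⟨(1 - μ ^ 2)⁻¹ • g y, ?_⟩
    rw [map_smul, hfg, smul_smul, inv_mul_cancel₀ hc, one_smul]
  have e := LinearEquiv.ofBijective f ⟨hinj, hsurj⟩
  constructor
  · intro hbot
    exact hne (Submodule.rank_eq_zero.mp
      (by rw [e.rank_eq]; exact Submodule.rank_eq_zero.mpr hbot))
  · exact e.rank_eq
end
end

section
/- Let P: ℝ → ℝ be a bounded measurable function with P(x) = 0 for x ≤ c and P(x) = 1 for x ≥ d, for some c ≤ d. Then for every z ∈ ℝ, the function x ↦ P(x+z) − P(x) is integrable and ∫_ℝ (P(x+z) − P(x)) dx = z. -/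
/-!
Outside `[min c (c - z), max d (d - z)]` both `P (x + z)` and `P x` equal the same constant, so the
difference has compact support. On an interval `[A, B]` the integral of `P (x + z) - P x` telescopes
to `∫_B^{B+z} P - ∫_A^{A+z} P`; for the endpoints above, these are integrals of the constants that
`P` takes near `+∞` and `-∞`.
-/

open MeasureTheory Set Function intervalIntegral

section ShiftedDifference

variable {P : ℝ → ℝ} {a b c d : ℝ}

theorem support_comp_add_sub_subset_Ioc (ha : ∀ x ≤ c, P x = a) (hb : ∀ x, d ≤ x → P x = b)
    (z : ℝ) : support (fun x => P (x + z) - P x) ⊆ Ioc (min c (c - z)) (max d (d - z)) := by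
  intro x hx
  by_contra hx'
  refine hx ?_
  rcases not_and_or.1 hx' with hlo | hhi
  · obtain ⟨hxc, hxzc⟩ := le_min_iff.1 (not_lt.1 hlo)
    simp only [ha x hxc, ha (x + z) (by linarith), sub_self]
  · obtain ⟨hdx, hdxz⟩ := max_le_iff.1 (not_le.1 hhi).le
    simp only [hb x hdx, hb (x + z) (by linarith), sub_self]

theorem intervalIntegral_comp_add_sub (hP : ∀ a b, IntervalIntegrable P volume a b) (A B z : ℝ) :
    ∫ x in A..B, (P (x + z) - P x) = (∫ x in B..B + z, P x) - ∫ x in A..A + z, P x := by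
  rw [integral_sub ((IntervalIntegrable.comp_add_right_iff).2 (hP _ _)) (hP A B),
    integral_comp_add_right, integral_interval_sub_interval_comm' (hP _ _) (hP _ _) (hP _ _)]

theorem intervalIntegral_eq_mul_of_forall_eq {f : ℝ → ℝ} {u v k : ℝ}
    (h : ∀ x ∈ uIcc u v, f x = k) : ∫ x in u..v, f x = (v - u) * k := by
  rw [integral_congr h, intervalIntegral.integral_const, smul_eq_mul]

variable (hP : ∀ a b, IntervalIntegrable P volume a b) (ha : ∀ x ≤ c, P x = a)
  (hb : ∀ x, d ≤ x → P x = b)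
include hP ha hb

theorem integrable_comp_add_sub (z : ℝ) : Integrable (fun x => P (x + z) - P x) := by
  have hint : IntervalIntegrable (fun x => P (x + z) - P x) volume
      (min c (c - z)) (max d (d - z)) :=
    ((IntervalIntegrable.comp_add_right_iff).2 (hP _ _)).sub (hP _ _)
  exact (integrableOn_iff_integrable_of_support_subset
    ((support_comp_add_sub_subset_Ioc ha hb z).trans Ioc_subset_uIoc)).1 hint.def'

theorem integral_comp_add_sub (z : ℝ) : ∫ x, (P (x + z) - P x) = z * (b - a) := by
  set A := min c (c - z)
  set B := max d (d - z)
  have hbot : ∫ x in A..A + z, P x = z * a := by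
    rw [intervalIntegral_eq_mul_of_forall_eq (k := a), add_sub_cancel_left]
    intro x hx
    refine ha x (hx.2.trans (max_le_iff.2 ⟨min_le_left _ _, ?_⟩))
    linarith [min_le_right c (c - z)]
  have htop : ∫ x in B..B + z, P x = z * b := by
    rw [intervalIntegral_eq_mul_of_forall_eq (k := b), add_sub_cancel_left]
    intro x hx
    refine hb x ((le_min_iff.2 ⟨le_max_left _ _, ?_⟩).trans hx.1)
    linarith [le_max_right d (d - z)]
  rw [← integral_eq_integral_of_support_subset (support_comp_add_sub_subset_Ioc ha hb z),
    intervalIntegral_comp_add_sub hP, htop, hbot, mul_sub]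

end ShiftedDifference

theorem integral_of_shifted_switch_general (P : ℝ → ℝ) (c d : ℝ)
    (hmeas : Measurable P) (hbdd : ∃ C : ℝ, ∀ x : ℝ, |P x| ≤ C)
    (h0 : ∀ x : ℝ, x ≤ c → P x = 0) (h1 : ∀ x : ℝ, d ≤ x → P x = 1) :
    ∀ z : ℝ,
      Integrable (fun x : ℝ => P (x + z) - P x) volume ∧
      (∫ x : ℝ, (P (x + z) - P x)) = z := by
  obtain ⟨C, hC⟩ := hbdd
  have hP : ∀ a b, IntervalIntegrable P volume a b := fun a b =>
    (intervalIntegrable_const (c := C)).mono_fun hmeas.aestronglyMeasurable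
      (ae_of_all _ fun x => (hC x).trans (le_abs_self C))
  intro z
  refine ⟨integrable_comp_add_sub hP h0 h1 z, ?_⟩
  rw [integral_comp_add_sub hP h0 h1 z, sub_zero, mul_one]

/-- for a bounded measurable switch function `P` (equal to `0` for `x ≤ c`
and to `1` for `x ≥ d`), the function `x ↦ P(x+z) − P(x)` is integrable with
`∫ (P(x+z) − P(x)) dx = z`. -/
theorem integral_of_shifted_switch (P : ℝ → ℝ) (c d : ℝ) (hcd : c ≤ d)
    (hmeas : Measurable P) (hbdd : ∃ C : ℝ, ∀ x : ℝ, |P x| ≤ C)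
    (h0 : ∀ x : ℝ, x ≤ c → P x = 0) (h1 : ∀ x : ℝ, d ≤ x → P x = 1) :
    ∀ z : ℝ,
      Integrable (fun x : ℝ => P (x + z) - P x) volume ∧
      (∫ x : ℝ, (P (x + z) - P x)) = z :=
  integral_of_shifted_switch_general P c d hmeas hbdd h0 h1
end

section
/- Let H be a self-adjoint operator on a Hilbert space and V a bounded self-adjoint operator such that V(z − H)⁻¹ is compact for every non-real z. Let W ∈ C_c^∞(ℝ). Then W(H + V) − W(H) is a compact operator. -/
noncomputable section

variable {E : Type*} [NormedAddCommGroup E] [InnerProductSpace ℂ E] [CompleteSpace E]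

private lemma compact_mul_left (S : E →L[ℂ] E) {T : E →L[ℂ] E}
    (h : IsCompactOperator ⇑T) : IsCompactOperator ⇑(S * T) := by
  have := h.clm_comp (g := S)
  simpa [Function.comp] using this

private lemma compact_mul_right {S : E →L[ℂ] E} (T : E →L[ℂ] E)
    (h : IsCompactOperator ⇑S) : IsCompactOperator ⇑(S * T) := by
  have := h.comp_clm (g := T)
  simpa [Function.comp] using this

private lemma compact_pow_sub (A B : E →L[ℂ] E) (h : IsCompactOperator ⇑(A - B)) :
    ∀ n : ℕ, IsCompactOperator ⇑(A ^ n - B ^ n) := by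
  intro n
  induction n with
  | zero => simpa using isCompactOperator_zero
  | succ n ih =>
    have key : A ^ (n + 1) - B ^ (n + 1) = A * (A ^ n - B ^ n) + (A - B) * B ^ n := by
      rw [pow_succ' A, pow_succ' B]; noncomm_ring
    rw [key]
    exact (compact_mul_left A ih).add (compact_mul_right (B ^ n) h)

private lemma compact_aeval_sub (A B : E →L[ℂ] E) (h : IsCompactOperator ⇑(A - B))
    (p : Polynomial ℝ) :
    IsCompactOperator ⇑(Polynomial.aeval A p - Polynomial.aeval B p) := by
  induction p using Polynomial.induction_on' with
  | add p q hp hq =>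
    have key : Polynomial.aeval A (p + q) - Polynomial.aeval B (p + q)
        = (Polynomial.aeval A p - Polynomial.aeval B p)
          + (Polynomial.aeval A q - Polynomial.aeval B q) := by
      simp only [map_add]; abel
    rw [key]
    exact hp.add hq
  | monomial n c =>
    have key : Polynomial.aeval A (Polynomial.monomial n c)
        - Polynomial.aeval B (Polynomial.monomial n c)
        = algebraMap ℝ (E →L[ℂ] E) c * (A ^ n - B ^ n) := by
      simp [Polynomial.aeval_monomial, mul_sub]
    rw [key]
    exact compact_mul_left _ (compact_pow_sub A B h n)

private lemma spectrum_abs_le {a : E →L[ℂ] E} [Nontrivial E] {x : ℝ}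
    (hx : x ∈ spectrum ℝ a) : |x| ≤ ‖a‖ := by
  have hx' : (algebraMap ℝ ℂ x) ∈ spectrum ℂ a := (spectrum.algebraMap_mem_iff ℂ).mpr hx
  have := spectrum.norm_le_norm_of_mem hx'
  simpa using this

/-- if `H` and `V` are self-adjoint, `V(z − H)⁻¹` is compact for every
non-real `z`, and `W ∈ C_c^∞(ℝ)`, then `W(H + V) − W(H)` is compact. `W(·)` is given by
the (continuous) functional calculus of self-adjoint operators. -/
theorem compactness_of_functional_calculus_difference (H V : E →L[ℂ] E)
    (hH : IsSelfAdjoint H) (hV : IsSelfAdjoint V)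
    (hres : ∀ z : ℂ, z.im ≠ 0 →
      IsCompactOperator (⇑(V ∘L Ring.inverse (z • (1 : E →L[ℂ] E) - H))))
    (W : ℝ → ℝ) (hW₁ : ContDiff ℝ (⊤ : ℕ∞) W) (hW₂ : HasCompactSupport W) :
    IsCompactOperator (⇑(cfc W (H + V) - cfc W H)) := by
  rcases subsingleton_or_nontrivial E with hE | hE
  · refine ⟨Set.univ, Set.univ.toFinite.isCompact, by simp⟩
  -- Step 1: `V` is compact.
  have hunit : IsUnit (Complex.I • (1 : E →L[ℂ] E) - H) := by
    have hIni : Complex.I ∉ spectrum ℂ H := by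
      intro hmem
      have := hH.im_eq_zero_of_mem_spectrum hmem
      simp at this
    rw [spectrum.notMem_iff] at hIni
    rwa [Algebra.algebraMap_eq_smul_one] at hIni
  have hVc : IsCompactOperator ⇑V := by
    have h1 := (hres Complex.I (by simp)).comp_clm
      (g := Complex.I • (1 : E →L[ℂ] E) - H)
    have h2 : (V ∘L Ring.inverse (Complex.I • (1 : E →L[ℂ] E) - H))
        ∘L (Complex.I • (1 : E →L[ℂ] E) - H) = V := by
      have : (V ∘L Ring.inverse (Complex.I • (1 : E →L[ℂ] E) - H))
          ∘L (Complex.I • (1 : E →L[ℂ] E) - H)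
          = V * (Ring.inverse (Complex.I • (1 : E →L[ℂ] E) - H)
              * (Complex.I • (1 : E →L[ℂ] E) - H)) := by
        rfl
      rw [this, Ring.inverse_mul_cancel _ hunit, mul_one]
    rw [← h2]
    exact h1
  -- Step 2: approximation by polynomials.
  have hHV : IsSelfAdjoint (H + V) := hH.add hV
  set M : ℝ := max ‖H + V‖ ‖H‖ with hM
  have hWc : ContinuousOn W (Set.Icc (-M) M) := hW₁.continuous.continuousOn
  suffices hmem : (cfc W (H + V) - cfc W H) ∈
      closure {f : E →L[ℂ] E | IsCompactOperator ⇑f} by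
    have hclosed : IsClosed {f : E →L[ℂ] E | IsCompactOperator ⇑f} :=
      isClosed_setOf_isCompactOperator (𝕜₁ := ℂ) (𝕜₂ := ℂ)
    exact hclosed.closure_subset hmem
  rw [Metric.mem_closure_iff]
  intro ε hε
  obtain ⟨p, hp⟩ := exists_polynomial_near_of_continuousOn (-M) M W hWc (ε / 3)
    (by linarith)
  refine ⟨Polynomial.aeval (H + V) p - Polynomial.aeval H p,
    compact_aeval_sub _ _ (by simpa using hVc) p, ?_⟩
  have hbound : ∀ (a : E →L[ℂ] E), IsSelfAdjoint a → ‖a‖ ≤ M →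
      ‖cfc W a - Polynomial.aeval a p‖ ≤ ε / 3 := by
    intro a ha haM
    have hc1 : ContinuousOn W (spectrum ℝ a) := hW₁.continuous.continuousOn
    have hc2 : ContinuousOn (fun x => Polynomial.eval x p) (spectrum ℝ a) :=
      (Polynomial.continuous p).continuousOn
    rw [← cfc_polynomial p a ha, ← cfc_sub W (fun x => Polynomial.eval x p) a hc1 hc2]
    refine norm_cfc_le (by linarith) fun x hx => ?_
    have hxM : x ∈ Set.Icc (-M) M := by
      have := spectrum_abs_le hx
      have habs : |x| ≤ M := this.trans haM
      rw [abs_le] at habs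
      exact ⟨habs.1, habs.2⟩
    have := hp x hxM
    rw [Real.norm_eq_abs]
    have : |W x - Polynomial.eval x p| = |Polynomial.eval x p - W x| := abs_sub_comm _ _
    rw [this]
    exact (hp x hxM).le
  have key : (cfc W (H + V) - cfc W H)
      - (Polynomial.aeval (H + V) p - Polynomial.aeval H p)
      = (cfc W (H + V) - Polynomial.aeval (H + V) p)
        - (cfc W H - Polynomial.aeval H p) := by abel
  rw [dist_eq_norm, key]
  calc ‖(cfc W (H + V) - Polynomial.aeval (H + V) p) - (cfc W H - Polynomial.aeval H p)‖
      ≤ ‖cfc W (H + V) - Polynomial.aeval (H + V) p‖ + ‖cfc W H - Polynomial.aeval H p‖ :=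
        norm_sub_le _ _
    _ ≤ ε / 3 + ε / 3 := add_le_add (hbound _ hHV (le_max_left _ _))
        (hbound _ hH (le_max_right _ _))
    _ < ε := by linarith
end
end
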